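/- arXiv:2306.15883 — 2 statements merged into one kernel-verified Lean document; each statement's English description precedes it below -/
import Mathlib

section
/- Let l ≥ 1, let n₁, …, n_l be positive integers, a₁, …, a_l integers, and let n be a further positive integer and a a further integer. Define Z(t) := exp(∑_{m≥1} (1/m) (∏_{i=1}^{l} (1 + (−1)^{n_i} a_i^m)) t^m) ∈ ℚ⟦t⟧ and Z'(t) := exp(∑_{m≥1} (1/m) (∏_{i=1}^{l} (1 + (−1)^{n_i} a_i^m)) (1 + (−1)^n a^m) t^m) ∈ ℚ⟦t⟧. Then Z'(t) = Z(t) · (Z(a t))^{(−1)^n}, where Z(a t) denotes the rescaling of Z by a (substituting a·t for t), i.e. Z' = Z · rescale_a(Z) if n is even and Z' = Z · (rescale_a(Z))^{−1} if n is odd. -/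
open PowerSeries Finset

/-- Formal exponential of a power series (the genuine exponential composition when the
constant coefficient of `g` is zero). -/
noncomputable def psExp (g : PowerSeries ℚ) : PowerSeries ℚ :=
  PowerSeries.mk fun n =>
    PowerSeries.coeff n (∑ k ∈ Finset.range (n + 1), (k.factorial : ℚ)⁻¹ • g ^ k)

/-! For `g(0) = 0`, `psExp g` is the composite `exp ∘ g`, hence the solution of `E' = g' E`,
`E(0) = 1`; since that solution is unique, `psExp (g + h) = psExp g * psExp h`. The new factor
`1 + (-1)ⁿ aᵐ` splits the logarithm of `Z'` as `g + (-1)ⁿ g(at)`, where `g` is the logarithm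
of `Z`. -/

namespace PowerSeries

theorem coeff_pow_eq_zero_of_lt {R : Type*} [CommSemiring R] {g : R⟦X⟧}
    (hg : constantCoeff g = 0) {m k : ℕ} (h : m < k) : coeff m (g ^ k) = 0 :=
  coeff_of_lt_order m <| (Nat.cast_lt.2 h).trans_le (le_order_pow_of_constantCoeff_eq_zero k hg)

theorem eq_of_derivative_eq_mul {K : Type*} [Field K] [CharZero K] {F G w : K⟦X⟧}
    (hF : d⁄dX K F = F * w) (hG : d⁄dX K G = G * w)
    (hc : constantCoeff F = constantCoeff G) (hG0 : constantCoeff G ≠ 0) : F = G := by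
  have hGG : G * G⁻¹ = 1 := PowerSeries.mul_inv_cancel G hG0
  have hquot : F * G⁻¹ = 1 := by
    refine derivative.ext ?_ (by simp [hc, hG0])
    rw [Derivation.leibniz, derivative_inv', hF, hG, smul_eq_mul, smul_eq_mul, derivative_one]
    linear_combination (-(F * G⁻¹ * w)) * hGG
  calc F = F * G⁻¹ * G := by rw [mul_assoc, PowerSeries.inv_mul_cancel G hG0, mul_one]
    _ = G := by rw [hquot, one_mul]

end PowerSeries

theorem psExp_eq_subst_exp {g : ℚ⟦X⟧} (hg : constantCoeff g = 0) :
    psExp g = (exp ℚ).subst g := by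
  ext m
  rw [coeff_subst' (HasSubst.of_constantCoeff_zero' hg),
    finsum_eq_sum_of_support_subset (s := range (m + 1))]
  · simp [psExp, map_sum, coeff_exp]
  · intro k hk
    simp only [Function.mem_support, coe_range, Set.mem_Iio] at hk ⊢
    by_contra! hkm
    exact hk (by rw [coeff_pow_eq_zero_of_lt hg (by omega), smul_zero])

theorem constantCoeff_psExp (g : ℚ⟦X⟧) : constantCoeff (psExp g) = 1 := by
  rw [← coeff_zero_eq_constantCoeff_apply]
  simp [psExp]

theorem derivative_psExp {g : ℚ⟦X⟧} (hg : constantCoeff g = 0) :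
    d⁄dX ℚ (psExp g) = psExp g * d⁄dX ℚ g := by
  rw [psExp_eq_subst_exp hg, derivative_subst (HasSubst.of_constantCoeff_zero' hg), derivative_exp]

theorem psExp_add {g h : ℚ⟦X⟧} (hg : constantCoeff g = 0) (hh : constantCoeff h = 0) :
    psExp (g + h) = psExp g * psExp h := by
  have hgh : constantCoeff (g + h) = 0 := by rw [map_add, hg, hh, add_zero]
  refine eq_of_derivative_eq_mul (w := d⁄dX ℚ (g + h)) (derivative_psExp hgh) ?_
    (by simp [constantCoeff_psExp]) (by simp [constantCoeff_psExp])
  rw [Derivation.leibniz, derivative_psExp hg, derivative_psExp hh, map_add, smul_eq_mul,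
    smul_eq_mul]
  ring

theorem psExp_zero : psExp 0 = 1 := by
  ext m
  simp [psExp, sum_range_succ', coeff_one]

theorem psExp_neg {g : ℚ⟦X⟧} (hg : constantCoeff g = 0) : psExp (-g) = (psExp g)⁻¹ := by
  rw [eq_inv_iff_mul_eq_one (by simp [constantCoeff_psExp]), ← psExp_add (by simp [hg]) hg,
    neg_add_cancel, psExp_zero]

theorem rescale_psExp (c : ℚ) (g : ℚ⟦X⟧) : rescale c (psExp g) = psExp (rescale c g) := by
  ext m
  simp only [psExp, coeff_rescale, coeff_mk, map_sum, coeff_smul, ← map_pow, smul_eq_mul,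
    mul_sum]
  exact sum_congr rfl fun _ _ => by ring

theorem lefschetz_zeta_inductive_step_general
    (l : ℕ) (n : Fin l → ℕ) (a : Fin l → ℤ)
    (n' : ℕ) (a' : ℤ) :
    psExp (PowerSeries.mk fun m =>
        if m = 0 then 0 else
          (1 / m : ℚ) * (∏ i, (1 + (-1) ^ n i * (a i : ℚ) ^ m)) *
            (1 + (-1) ^ n' * (a' : ℚ) ^ m)) =
      psExp (PowerSeries.mk fun m =>
          if m = 0 then 0 else
            (1 / m : ℚ) * (∏ i, (1 + (-1) ^ n i * (a i : ℚ) ^ m))) *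
        (if Even n' then
            PowerSeries.rescale (a' : ℚ)
              (psExp (PowerSeries.mk fun m =>
                if m = 0 then 0 else
                  (1 / m : ℚ) * (∏ i, (1 + (-1) ^ n i * (a i : ℚ) ^ m))))
         else
            (PowerSeries.rescale (a' : ℚ)
              (psExp (PowerSeries.mk fun m =>
                if m = 0 then 0 else
                  (1 / m : ℚ) * (∏ i, (1 + (-1) ^ n i * (a i : ℚ) ^ m)))))⁻¹) := by
  set g : ℚ⟦X⟧ := mk fun m =>
    if m = 0 then 0 else (1 / m : ℚ) * ∏ i, (1 + (-1) ^ n i * (a i : ℚ) ^ m)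
  have hg : constantCoeff g = 0 := by simp [g, ← coeff_zero_eq_constantCoeff_apply]
  have hrg : constantCoeff (rescale (a' : ℚ) g) = 0 := by
    simp [← coeff_zero_eq_constantCoeff_apply, hg]
  have hsplit : (mk fun m => if m = 0 then 0 else (1 / m : ℚ) *
      (∏ i, (1 + (-1) ^ n i * (a i : ℚ) ^ m)) * (1 + (-1) ^ n' * (a' : ℚ) ^ m)) =
      g + (-1 : ℚ) ^ n' • rescale (a' : ℚ) g := by
    ext m
    simp only [g, map_add, map_smul, coeff_mk, coeff_rescale, smul_eq_mul]
    split_ifs <;> ring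
  rw [hsplit]
  rcases Nat.even_or_odd n' with heven | hodd
  · rw [if_pos heven, heven.neg_one_pow, one_smul, psExp_add hg hrg, rescale_psExp]
  · rw [if_neg (Nat.not_even_iff_odd.2 hodd), hodd.neg_one_pow, neg_one_smul,
      psExp_add hg (by rw [map_neg, hrg, neg_zero]), psExp_neg hrg, rescale_psExp]

/-- Inductive step for the zeta function of a product of spheres: adjoining one further
sphere `Sⁿ` with basic eigenvalue `a` gives `Z'(t) = Z(t) · Z(at)^{(-1)ⁿ}`. -/
theorem lefschetz_zeta_inductive_step
    (l : ℕ) (hl : 1 ≤ l) (n : Fin l → ℕ) (hn : ∀ i, 0 < n i) (a : Fin l → ℤ)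
    (n' : ℕ) (hn' : 0 < n') (a' : ℤ) :
    psExp (PowerSeries.mk fun m =>
        if m = 0 then 0 else
          (1 / m : ℚ) * (∏ i, (1 + (-1) ^ n i * (a i : ℚ) ^ m)) *
            (1 + (-1) ^ n' * (a' : ℚ) ^ m)) =
      psExp (PowerSeries.mk fun m =>
          if m = 0 then 0 else
            (1 / m : ℚ) * (∏ i, (1 + (-1) ^ n i * (a i : ℚ) ^ m))) *
        (if Even n' then
            PowerSeries.rescale (a' : ℚ)
              (psExp (PowerSeries.mk fun m =>
                if m = 0 then 0 else
                  (1 / m : ℚ) * (∏ i, (1 + (-1) ^ n i * (a i : ℚ) ^ m))))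
         else
            (PowerSeries.rescale (a' : ℚ)
              (psExp (PowerSeries.mk fun m =>
                if m = 0 then 0 else
                  (1 / m : ℚ) * (∏ i, (1 + (-1) ^ n i * (a i : ℚ) ^ m)))))⁻¹) :=
  lefschetz_zeta_inductive_step_general l n a n' a'
end

section
/- Let l ≥ 1, let n₁, …, n_l be positive integers and a₁, …, a_l integers. Assume: (i) there is some i with n_i even and a_i = −1; (ii) there is some j with |a_j| > 1; and (iii) |a_k| ≥ 2 for every k with n_k odd. Then ℓ(m) = 0 for every odd positive integer m, and there exists N > 0 such that ℓ(m) ≠ 0 for every even integer m > N, where ℓ(m) := ∑_{r ∣ m} μ(m/r) ∏_{i=1}^{l} (1 + (−1)^{n_i} a_i^r). -/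
/-!
For odd `m` every divisor `r` is odd, and the factor `1 + (-1)^r` of `L(r)` coming from the
even-dimensional eigenvalue `-1` vanishes. For even `m`, put `P = ∏ᵢ max 1 |aᵢ| ≥ 2`. Then
`|L(r)| ≤ 2^l P^r` for all `r`, while `|L(m)| ≥ P^m / 2^l` because `m` is even and the
odd-dimensional eigenvalues have modulus at least `2`. The proper divisors of `m` are at most
`m / 2`, so their contribution to `ℓ(m)` is less than `2^l P^(m/2+1)`, which is eventually
smaller than `P^m / 2^l`.
-/

open Finset ArithmeticFunction.Moebius

theorem sum_divisors_moebius_mul_eq_zero_of_odd {f : ℕ → ℤ} (hf : ∀ r, Odd r → f r = 0)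
    {m : ℕ} (hm : Odd m) : ∑ r ∈ m.divisors, μ (m / r) * f r = 0 :=
  sum_eq_zero fun r hr => by rw [hf r (hm.of_dvd_nat (Nat.dvd_of_mem_divisors hr)), mul_zero]

theorem Nat.le_div_two_of_mem_properDivisors {r m : ℕ} (hr : r ∈ m.properDivisors) :
    r ≤ m / 2 :=
  (Nat.le_div_iff_mul_le two_pos).2 <|
    (Nat.mul_le_mul_left r (Nat.one_lt_div_of_mem_properDivisors hr)).trans (Nat.mul_div_le m r)

theorem Int.geomSum_lt {P : ℤ} (hP : 2 ≤ P) {s : Finset ℕ} {N : ℕ}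
    (hs : ∀ r ∈ s, r < N) : ∑ r ∈ s, P ^ r < P ^ N := by
  lift P to ℕ using by omega
  exact_mod_cast Nat.geomSum_lt (by exact_mod_cast hP) hs

theorem sum_divisors_moebius_mul_ne_zero {f : ℕ → ℤ} {K P : ℤ} {m : ℕ} (hK : 0 < K)
    (hP : 2 ≤ P) (hf : ∀ r, |f r| ≤ K * P ^ r) (hfm : P ^ m ≤ K * |f m|)
    (hm : K ^ 2 * P ^ (m / 2 + 1) ≤ P ^ m) : ∑ r ∈ m.divisors, μ (m / r) * f r ≠ 0 := by
  have hm0 : m ≠ 0 := by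
    rintro rfl
    norm_num at hm
    nlinarith
  have hrest : |∑ r ∈ m.properDivisors, μ (m / r) * f r| < |f m| := by
    have hlt : K * |∑ r ∈ m.properDivisors, μ (m / r) * f r| < K * |f m| :=
      calc K * |∑ r ∈ m.properDivisors, μ (m / r) * f r|
          ≤ K * ∑ r ∈ m.properDivisors, K * P ^ r := by
            gcongr
            refine (abs_sum_le_sum_abs _ _).trans (sum_le_sum fun r _ => ?_)
            rw [abs_mul]
            exact (mul_le_of_le_one_left (abs_nonneg _)
              ArithmeticFunction.abs_moebius_le_one).trans (hf r)
        _ = K ^ 2 * ∑ r ∈ m.properDivisors, P ^ r := by rw [← mul_sum, sq, mul_assoc]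
        _ < K ^ 2 * P ^ (m / 2 + 1) := by
            gcongr
            exact Int.geomSum_lt hP fun r hr =>
              Nat.lt_succ_of_le (Nat.le_div_two_of_mem_properDivisors hr)
        _ ≤ K * |f m| := hm.trans hfm
    exact lt_of_mul_lt_mul_left hlt hK.le
  rw [← Nat.cons_self_properDivisors hm0, sum_cons, Nat.div_self (Nat.pos_of_ne_zero hm0),
    ArithmeticFunction.moebius_apply_one, one_mul]
  intro h
  rw [add_eq_zero_iff_eq_neg.mp h, abs_neg] at hrest
  exact lt_irrefl _ hrest

theorem two_pow_sq_mul_pow_le {P : ℤ} (hP : 2 ≤ P) {l m : ℕ} (hm : 4 * l + 2 ≤ m) :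
    (2 ^ l) ^ 2 * P ^ (m / 2 + 1) ≤ P ^ m :=
  calc (2 ^ l) ^ 2 * P ^ (m / 2 + 1) = 2 ^ (2 * l) * P ^ (m / 2 + 1) := by ring
    _ ≤ P ^ (2 * l) * P ^ (m / 2 + 1) := by gcongr
    _ ≤ P ^ m := by
        rw [← pow_add]
        exact pow_le_pow_right₀ (by omega) (by omega)

section Lefschetz

variable {ι : Type*} [Fintype ι]

/-- `L(r) = ∏ᵢ (1 + (-1)^{nᵢ} aᵢ^r)`, the Lefschetz number of the `r`-th iterate of a map of
`∏ᵢ S^{nᵢ}` with basic eigenvalues `aᵢ`. -/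
def lefschetzNumber (n : ι → ℕ) (a : ι → ℤ) (r : ℕ) : ℤ :=
  ∏ i, (1 + (-1) ^ n i * a i ^ r)

theorem lefschetzNumber_eq_zero_of_odd {n : ι → ℕ} {a : ι → ℤ}
    (h : ∃ i, Even (n i) ∧ a i = -1) {r : ℕ} (hr : Odd r) : lefschetzNumber n a r = 0 := by
  obtain ⟨i, hn, ha⟩ := h
  refine prod_eq_zero (mem_univ i) ?_
  rw [ha, hn.neg_one_pow, hr.neg_one_pow]
  ring

theorem abs_one_add_neg_one_pow_mul_pow_le (k r : ℕ) (x : ℤ) :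
    |1 + (-1) ^ k * x ^ r| ≤ 2 * max 1 |x| ^ r :=
  calc |1 + (-1) ^ k * x ^ r| ≤ |1| + |(-1) ^ k * x ^ r| := abs_add_le _ _
    _ = 1 + |x| ^ r := by simp [abs_mul, abs_pow]
    _ ≤ max 1 |x| ^ r + max 1 |x| ^ r := by
        gcongr
        · exact one_le_pow₀ (le_max_left _ _)
        · exact le_max_right _ _
    _ = 2 * max 1 |x| ^ r := by ring

theorem max_one_abs_pow_le_two_mul_abs {k r : ℕ} {x : ℤ} (hx : Odd k → 2 ≤ |x|) (hr : Even r)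
    (hr0 : r ≠ 0) : max 1 |x| ^ r ≤ 2 * |1 + (-1) ^ k * x ^ r| := by
  rw [← hr.pow_abs x]
  rcases Nat.even_or_odd k with hk | hk
  · rw [hk.neg_one_pow, one_mul, abs_of_pos (a := 1 + |x| ^ r) (by positivity)]
    rcases eq_or_ne x 0 with rfl | hx0
    · simp [hr0]
    · rw [max_eq_right (Int.one_le_abs hx0)]
      linarith [pow_nonneg (abs_nonneg x) r]
  · have h2 := hx hk
    have h2r : 2 ≤ |x| ^ r := (le_self_pow₀ (by omega) hr0).trans' h2
    rw [hk.neg_one_pow, neg_one_mul, max_eq_right (by omega),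
      abs_of_nonpos (a := 1 + -|x| ^ r) (by omega)]
    omega

theorem two_le_prod_max_one_abs {a : ι → ℤ} (h : ∃ j, 1 < |a j|) :
    2 ≤ ∏ i, max 1 |a i| := by
  classical
  obtain ⟨j, hj⟩ := h
  rw [← mul_prod_erase _ _ (mem_univ j)]
  have : 1 ≤ ∏ i ∈ univ.erase j, max 1 |a i| := one_le_prod fun i _ => le_max_left _ _
  nlinarith [le_max_right 1 |a j|]

theorem abs_lefschetzNumber_le (n : ι → ℕ) (a : ι → ℤ) (r : ℕ) :
    |lefschetzNumber n a r| ≤ 2 ^ Fintype.card ι * (∏ i, max 1 |a i|) ^ r := by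
  rw [lefschetzNumber, abs_prod, ← prod_pow, ← card_univ, ← prod_const, ← prod_mul_distrib]
  exact prod_le_prod (fun _ _ => abs_nonneg _)
    fun i _ => abs_one_add_neg_one_pow_mul_pow_le (n i) r (a i)

theorem pow_le_two_pow_mul_abs_lefschetzNumber {n : ι → ℕ} {a : ι → ℤ}
    (h : ∀ k, Odd (n k) → 2 ≤ |a k|) {r : ℕ} (hr : Even r) (hr0 : r ≠ 0) :
    (∏ i, max 1 |a i|) ^ r ≤ 2 ^ Fintype.card ι * |lefschetzNumber n a r| := by
  rw [lefschetzNumber, abs_prod, ← prod_pow, ← card_univ, ← prod_const, ← prod_mul_distrib]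
  exact prod_le_prod (fun _ _ => by positivity)
    fun i _ => max_one_abs_pow_le_two_mul_abs (h i) hr hr0

end Lefschetz

theorem lefschetz_period_numbers_even_case_general
    (l : ℕ) (n : Fin l → ℕ) (a : Fin l → ℤ)
    (h1 : ∃ i, Even (n i) ∧ a i = -1)
    (h2 : ∃ j, 1 < |a j|)
    (h3 : ∀ k, Odd (n k) → 2 ≤ |a k|) :
    (∀ m : ℕ, 0 < m → Odd m →
      (∑ r ∈ m.divisors, ArithmeticFunction.moebius (m / r) *
          ∏ i, (1 + (-1) ^ n i * a i ^ r)) = 0) ∧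
    ∃ N : ℕ, 0 < N ∧ ∀ m : ℕ, N < m → Even m →
      (∑ r ∈ m.divisors, ArithmeticFunction.moebius (m / r) *
          ∏ i, (1 + (-1) ^ n i * a i ^ r)) ≠ 0 := by
  have hP := two_le_prod_max_one_abs h2
  refine ⟨fun m _ hm => sum_divisors_moebius_mul_eq_zero_of_odd
    (fun r => lefschetzNumber_eq_zero_of_odd h1) hm, 4 * l + 1, by omega, fun m hm hme => ?_⟩
  refine sum_divisors_moebius_mul_ne_zero (f := lefschetzNumber n a) (K := 2 ^ l)
    (by positivity) hP (fun r => ?_) ?_ (two_pow_sq_mul_pow_le hP (l := l) (by omega))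
  · simpa using abs_lefschetzNumber_le n a r
  · simpa using pow_le_two_pow_mul_abs_lefschetzNumber h3 hme (by omega)

/-- If some `nᵢ` is even with `aᵢ = -1`, some `|aⱼ| > 1`, and `|aₖ| ≥ 2` whenever `nₖ` is
odd, then `ℓ(m) = 0` for every odd positive `m`, and `ℓ(m) ≠ 0` for every sufficiently
large even `m`, where `ℓ(m) = ∑_{r∣m} μ(m/r) ∏ᵢ (1 + (-1)^{nᵢ} aᵢʳ)`. -/
theorem lefschetz_period_numbers_even_case
    (l : ℕ) (hl : 1 ≤ l) (n : Fin l → ℕ) (hn : ∀ i, 0 < n i) (a : Fin l → ℤ)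
    (h1 : ∃ i, Even (n i) ∧ a i = -1)
    (h2 : ∃ j, 1 < |a j|)
    (h3 : ∀ k, Odd (n k) → 2 ≤ |a k|) :
    (∀ m : ℕ, 0 < m → Odd m →
      (∑ r ∈ m.divisors, ArithmeticFunction.moebius (m / r) *
          ∏ i, (1 + (-1) ^ n i * a i ^ r)) = 0) ∧
    ∃ N : ℕ, 0 < N ∧ ∀ m : ℕ, N < m → Even m →
      (∑ r ∈ m.divisors, ArithmeticFunction.moebius (m / r) *
          ∏ i, (1 + (-1) ^ n i * a i ^ r)) ≠ 0 :=
  lefschetz_period_numbers_even_case_general l n a h1 h2 h3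
end
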